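/- Each nonzero coset of the root lattice ℤR in the weight lattice X of an irreducible root system is represented by a unique minuscule fundamental weight; consequently the order of the fundamental group X/ℤR equals 1 + (number of minuscule fundamental weights). -/

import Mathlib

open scoped BigOperators

/-- The ambient Euclidean space of rank `n`. -/
abbrev EV (n : ℕ) : Type := EuclideanSpace ℝ (Fin n)

/-- The inner product `⟨x, y⟩` on `EV n`. -/
noncomputable def ip {n : ℕ} (x y : EV n) : ℝ := inner ℝ x y

/-- The pairing `⟨x, α∨⟩ = 2⟨x, α⟩/⟨α, α⟩` of a vector with the coroot of `α`. -/
noncomputable def pairing {n : ℕ} (x α : EV n) : ℝ := 2 * ip x α / ip α α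

/-- The coroot `α∨ = 2α/⟨α,α⟩`. -/
noncomputable def coroot {n : ℕ} (α : EV n) : EV n := (2 / ip α α) • α

/-- The subgroup of the affine transformation group consisting of (generated by)
all translations `t(v)`, `v ∈ L`. -/
noncomputable def transOf {n : ℕ} (L : AddSubgroup (EV n)) : Subgroup (EV n ≃ᵃ[ℝ] EV n) :=
  Subgroup.closure {g | ∃ v ∈ L, ∀ x, g x = x + v}

/-- The lattice `l·L`. -/
noncomputable def smulLat {n : ℕ} (l : ℕ) (L : AddSubgroup (EV n)) : AddSubgroup (EV n) :=
  AddSubgroup.map (AddMonoidHom.mk' (fun v => (l : ℝ) • v) (fun a b => smul_add _ a b)) L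

/-- An abstract reduced crystallographic **irreducible root system** of rank `n`,
realized in Euclidean space, together with a choice of positive roots and of
simple roots. -/
structure RootSystemData (n : ℕ) where
  /-- the set of roots -/
  Φ : Finset (EV n)
  /-- the positive roots `R⁺` -/
  pos : Finset (EV n)
  /-- the simple roots -/
  simple : Fin n → EV n
  zero_not_mem : (0 : EV n) ∉ Φ
  span_top : Submodule.span ℝ (Φ : Set (EV n)) = ⊤
  neg_mem : ∀ α ∈ Φ, -α ∈ Φ
  pair_int : ∀ α ∈ Φ, ∀ β ∈ Φ, ∃ k : ℤ, pairing α β = (k : ℝ)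
  reflect_mem : ∀ α ∈ Φ, ∀ β ∈ Φ, α - pairing α β • β ∈ Φ
  reduced : ∀ α ∈ Φ, (2 : ℝ) • α ∉ Φ
  pos_subset : pos ⊆ Φ
  pos_iff : ∀ α ∈ Φ, (α ∈ pos ↔ -α ∉ pos)
  simple_mem_pos : ∀ i, simple i ∈ pos
  pos_sum : ∀ α ∈ pos, ∃ c : Fin n → ℕ, α = ∑ i, (c i : ℝ) • simple i
  irred : ∀ s : Finset (EV n), s ⊆ Φ → s.Nonempty →
    (∀ α ∈ s, ∀ β ∈ Φ, ip α β ≠ 0 → β ∈ s) → s = Φ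

namespace RootSystemData

variable {n : ℕ} (P : RootSystemData n)

/-- `ρ`, half the sum of the positive roots. -/
noncomputable def rho : EV n := (2⁻¹ : ℝ) • ∑ α ∈ P.pos, α

/-- The Coxeter number `h = |Φ| / rank`. -/
def cox : ℕ := P.Φ.card / n

/-- `ϖ` is the fundamental dominant weight attached to the simple root `α_i`. -/
def IsFundWeight (i : Fin n) (ϖ : EV n) : Prop :=
  ∀ j, pairing ϖ (P.simple j) = if j = i then 1 else 0

/-- The root lattice `ℤR`. -/
noncomputable def rootLattice : AddSubgroup (EV n) :=
  AddSubgroup.closure (P.Φ : Set (EV n))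

/-- The weight lattice `X = {x | ⟨x, α∨⟩ ∈ ℤ for all roots α}`. -/
noncomputable def weightLattice : AddSubgroup (EV n) where
  carrier := {x | ∀ α ∈ P.Φ, ∃ k : ℤ, pairing x α = (k : ℝ)}
  zero_mem' := by
    intro α _
    exact ⟨0, by simp [pairing, ip]⟩
  add_mem' := by
    intro x y hx hy α hα
    obtain ⟨k₁, h₁⟩ := hx α hα
    obtain ⟨k₂, h₂⟩ := hy α hα
    refine ⟨k₁ + k₂, ?_⟩
    have h : pairing (x + y) α = pairing x α + pairing y α := by
      simp only [pairing, ip, inner_add_left]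
      ring
    rw [h, h₁, h₂]
    push_cast
    ring
  neg_mem' := by
    intro x hx α hα
    obtain ⟨k, h⟩ := hx α hα
    refine ⟨-k, ?_⟩
    have h' : pairing (-x) α = -pairing x α := by
      simp only [pairing, ip, inner_neg_left]
      ring
    rw [h', h]
    push_cast
    ring

/-- `x` is a dominant vector. -/
def Dominant (x : EV n) : Prop := ∀ i, 0 ≤ pairing x (P.simple i)

/-- The dominance order: `x ≤ y` iff `y - x` is a nonnegative integral
combination of the simple roots. -/
def DomLE (x y : EV n) : Prop :=
  ∃ c : Fin n → ℕ, y - x = ∑ i, (c i : ℝ) • P.simple i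

/-- `ϖ` is a minuscule weight: a nonzero dominant weight such that every dominant
weight `x ≤ ϖ` equals `ϖ`. -/
def Minuscule (ϖ : EV n) : Prop :=
  ϖ ≠ 0 ∧ ϖ ∈ P.weightLattice ∧ P.Dominant ϖ ∧
    ∀ x ∈ P.weightLattice, P.Dominant x → P.DomLE x ϖ → x = ϖ

/-- `ϖ` is the minuscule fundamental weight attached to the simple root `α_i`. -/
def MinusculeFundWeight (i : Fin n) (ϖ : EV n) : Prop :=
  P.IsFundWeight i ϖ ∧ P.Minuscule ϖ

/-- `α₀` is the dominant (=highest) short root; its coroot is the highest coroot. -/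
def IsDominantShortRoot (α₀ : EV n) : Prop :=
  α₀ ∈ P.pos ∧ (∀ β ∈ P.Φ, ip α₀ α₀ ≤ ip β β) ∧ P.Dominant α₀

/-- The value `d(x) = ∏_{α > 0} ⟨x + ρ, α∨⟩ / ⟨ρ, α∨⟩` of Weyl's degree formula. -/
noncomputable def weylDeg (x : EV n) : ℝ :=
  ∏ α ∈ P.pos, (pairing (x + P.rho) α / pairing P.rho α)

/-- The positive roots `R_i⁺` of the subsystem `R_i` spanned by the simple roots
other than `α_i`. -/
def posIn (i : Fin n) : Set (EV n) :=
  {α | α ∈ P.pos ∧ α ∈ Submodule.span ℝ (P.simple '' {j | j ≠ i})}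

/-- The finite Weyl group `W`, generated by the reflections `s_α`, viewed inside
the group of affine transformations of `EV n`. -/
noncomputable def weyl : Subgroup (EV n ≃ᵃ[ℝ] EV n) :=
  Subgroup.closure {g | ∃ α ∈ P.Φ, ∀ x, g x = x - pairing x α • coroot α}

/-- The parabolic subgroup `W_i` of `W` generated by the simple reflections `s_j`, `j ≠ i`. -/
noncomputable def weylParab (i : Fin n) : Subgroup (EV n ≃ᵃ[ℝ] EV n) :=
  Subgroup.closure {g | ∃ j, j ≠ i ∧ ∀ x,
    g x = x - pairing x (P.simple j) • coroot (P.simple j)}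

/-- The affine Weyl group `W_l`, generated by the affine reflections `s_{α, lk}`
in the hyperplanes `{x | ⟨x, α∨⟩ = lk}`, `α ∈ Φ`, `k ∈ ℤ`. -/
noncomputable def affWeyl (l : ℕ) : Subgroup (EV n ≃ᵃ[ℝ] EV n) :=
  Subgroup.closure {g | ∃ α ∈ P.Φ, ∃ k : ℤ,
    ∀ x, g x = x - (pairing x α - l * k) • coroot α}

/-- The extended affine Weyl group `Ŵ_l`, generated by `W` and the translations `t(lX)`. -/
noncomputable def extAffWeyl (l : ℕ) : Subgroup (EV n ≃ᵃ[ℝ] EV n) :=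
  P.weyl ⊔ transOf (smulLat l P.weightLattice)

/-- The lowest alcove `C_l = {x | 0 < ⟨x + ρ, α∨⟩ < l for all α ∈ R⁺}`. -/
noncomputable def lowAlcove (l : ℕ) : Set (EV n) :=
  {x | ∀ α ∈ P.pos, 0 < pairing (x + P.rho) α ∧ pairing (x + P.rho) α < l}

/-- The orbit of `0` under the dot action `w • x = w(x + ρ) - ρ` of a subgroup `H`
of the affine transformation group. -/
noncomputable def dotOrbitZero (H : Subgroup (EV n ≃ᵃ[ℝ] EV n)) : Set (EV n) :=
  {v | ∃ w ∈ H, w P.rho - P.rho = v}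

end RootSystemData

/-!
In every coset of `ℤR` in `X` take a shortest vector `y`; choosing it well, it is dominant.
Because distinct simple roots make obtuse angles, for any dominant `μ` in the same coset the
decomposition `μ - y = d⁺ - d⁻` into parts with disjoint supports in the simple roots satisfies
`⟨d⁺, d⁻⟩ ≤ 0` and `⟨μ, d⁻⟩ ≥ 0`, while shortness of `y` gives `2⟨y, d⁻⟩ ≤ ‖d⁻‖²`; together
these force `d⁻ = 0`, i.e. `y ≤ μ`. So `y` is the least dominant weight of its coset: it is
minuscule unless it is `0` (the coset `ℤR` itself), and every minuscule weight of the coset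
equals it. Counting the nonzero classes then gives `|X/ℤR| = 1 + #{minuscule weights}`.
-/

lemma ip_self_pos {n : ℕ} {α : EV n} (hα : α ≠ 0) : 0 < ip α α :=
  real_inner_self_pos.2 hα

lemma ip_self_eq_norm_sq {n : ℕ} (x : EV n) : ip x x = ‖x‖ ^ 2 :=
  real_inner_self_eq_norm_sq x

lemma ip_comm {n : ℕ} (x y : EV n) : ip x y = ip y x :=
  real_inner_comm y x

lemma ip_eq_pairing_mul {n : ℕ} {α : EV n} (hα : α ≠ 0) (x : EV n) :
    ip x α = pairing x α * ip α α / 2 := by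
  have := ip_self_pos hα
  unfold pairing
  field_simp

lemma pairing_nonneg_iff {n : ℕ} {α : EV n} (hα : α ≠ 0) {x : EV n} :
    0 ≤ pairing x α ↔ 0 ≤ ip x α := by
  have := ip_self_pos hα
  rw [pairing, div_nonneg_iff]
  constructor
  · rintro (⟨h, -⟩ | ⟨-, h⟩) <;> linarith
  · intro h; left; constructor <;> linarith

lemma abs_pairing_le {n : ℕ} {α : EV n} (hα : α ≠ 0) (x : EV n) :
    |pairing x α| ≤ 2 * ‖x‖ / ‖α‖ := by
  have hpos : 0 < ‖α‖ := norm_pos_iff.2 hα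
  calc |pairing x α| = 2 * |ip x α| / ‖α‖ ^ 2 := by
        rw [pairing, ip_self_eq_norm_sq, abs_div, abs_mul, abs_two, abs_pow, abs_norm]
    _ ≤ 2 * (‖x‖ * ‖α‖) / ‖α‖ ^ 2 := by gcongr; exact abs_real_inner_le_norm x α
    _ = 2 * ‖x‖ / ‖α‖ := by field_simp

lemma norm_sub_pairing_smul {n : ℕ} {α : EV n} (hα : α ≠ 0) (x : EV n) :
    ‖x - pairing x α • α‖ = ‖x‖ := by
  have h := ip_eq_pairing_mul hα x
  rw [← sq_eq_sq₀ (norm_nonneg _) (norm_nonneg _), ← ip_self_eq_norm_sq, ← ip_self_eq_norm_sq]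
  simp only [ip, inner_sub_left, inner_sub_right, inner_smul_left, inner_smul_right,
    real_inner_comm x α, RCLike.conj_to_real] at h ⊢
  linear_combination (-2 * pairing x α) * h

namespace RootSystemData

variable {n : ℕ} (P : RootSystemData n)

lemma ne_zero_of_mem {α : EV n} (hα : α ∈ P.Φ) : α ≠ 0 :=
  fun h => P.zero_not_mem (h ▸ hα)

lemma simple_mem (i : Fin n) : P.simple i ∈ P.Φ :=
  P.pos_subset (P.simple_mem_pos i)

lemma simple_ne_zero (i : Fin n) : P.simple i ≠ 0 :=
  P.ne_zero_of_mem (P.simple_mem i)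

lemma exists_nat_coeffs_of_mem {α : EV n} (hα : α ∈ P.Φ) :
    ∃ c : Fin n → ℕ, α = ∑ i, (c i : ℝ) • P.simple i ∨ -α = ∑ i, (c i : ℝ) • P.simple i := by
  by_cases hpos : α ∈ P.pos
  · obtain ⟨c, hc⟩ := P.pos_sum α hpos
    exact ⟨c, .inl hc⟩
  · have hneg : -α ∈ P.pos := by
      by_contra h
      exact hpos ((P.pos_iff α hα).2 h)
    obtain ⟨c, hc⟩ := P.pos_sum (-α) hneg
    exact ⟨c, .inr hc⟩

lemma mem_span_int_simple {α : EV n} (hα : α ∈ P.Φ) :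
    α ∈ Submodule.span ℤ (Set.range P.simple) := by
  have hsum : ∀ c : Fin n → ℕ,
      ∑ i, (c i : ℝ) • P.simple i ∈ Submodule.span ℤ (Set.range P.simple) :=
    fun c => Submodule.sum_mem _ fun i _ => by
      rw [Nat.cast_smul_eq_nsmul]
      exact Submodule.smul_of_tower_mem _ _ (Submodule.subset_span ⟨i, rfl⟩)
  obtain ⟨c, hc | hc⟩ := P.exists_nat_coeffs_of_mem hα
  · exact hc ▸ hsum c
  · have h := Submodule.neg_mem _ (hsum c)
    rwa [← hc, neg_neg] at h

lemma span_simple : Submodule.span ℝ (Set.range P.simple) = ⊤ := by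
  refine eq_top_iff.2 (P.span_top ▸ Submodule.span_le.2 fun α hα => ?_)
  exact Submodule.span_subset_span ℤ ℝ _ (P.mem_span_int_simple hα)

noncomputable def simpleBasis : Module.Basis (Fin n) ℝ (EV n) :=
  basisOfTopLeSpanOfCardEqFinrank P.simple P.span_simple.ge (by simp)

lemma coe_simpleBasis : ⇑P.simpleBasis = P.simple :=
  coe_basisOfTopLeSpanOfCardEqFinrank _ _ _

lemma sum_smul_simple_injective :
    Function.Injective fun c : Fin n → ℝ => ∑ i, c i • P.simple i := by
  convert P.simpleBasis.equivFun.symm.injective using 1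
  ext c : 1
  rw [Module.Basis.equivFun_symm_apply, coe_simpleBasis]

lemma mem_rootLattice_iff {x : EV n} :
    x ∈ P.rootLattice ↔ ∃ m : Fin n → ℤ, x = ∑ i, (m i : ℝ) • P.simple i := by
  have hspan : P.rootLattice = (Submodule.span ℤ (Set.range P.simple)).toAddSubgroup := by
    rw [Submodule.span_int_eq_addSubgroupClosure, rootLattice]
    refine le_antisymm (AddSubgroup.closure_le _ |>.2 fun α hα => ?_) ?_
    · rw [← Submodule.span_int_eq_addSubgroupClosure]
      exact P.mem_span_int_simple hα
    · exact AddSubgroup.closure_mono (Set.range_subset_iff.2 fun i => P.simple_mem i)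
  simp only [hspan, Submodule.mem_toAddSubgroup, Submodule.mem_span_range_iff_exists_fun,
    Int.cast_smul_eq_zsmul, eq_comm]

lemma rootLattice_le_weightLattice : P.rootLattice ≤ P.weightLattice :=
  AddSubgroup.closure_le _ |>.2 fun α hα β hβ => P.pair_int α hα β hβ

lemma mem_weightLattice_of_sub_mem {x y : EV n} (hx : x ∈ P.weightLattice)
    (hxy : x - y ∈ P.rootLattice) : y ∈ P.weightLattice := by
  simpa using P.weightLattice.sub_mem hx (P.rootLattice_le_weightLattice hxy)

lemma pairing_smul_mem_rootLattice {x α : EV n} (hx : x ∈ P.weightLattice) (hα : α ∈ P.Φ) :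
    pairing x α • α ∈ P.rootLattice := by
  obtain ⟨k, hk⟩ := hx α hα
  rw [hk, Int.cast_smul_eq_zsmul]
  exact AddSubgroup.zsmul_mem _ (AddSubgroup.subset_closure hα) k

lemma sub_mem_of_ip_pos {α β : EV n} (hα : α ∈ P.Φ) (hβ : β ∈ P.Φ)
    (hind : LinearIndependent ℝ ![α, β]) (hpos : 0 < ip α β) : α - β ∈ P.Φ := by
  have hα0 := P.ne_zero_of_mem hα
  have hβ0 := P.ne_zero_of_mem hβ
  have hαα := ip_self_pos hα0
  have hββ := ip_self_pos hβ0
  obtain ⟨k, hk⟩ := P.pair_int α hα β hβ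
  obtain ⟨k', hk'⟩ := P.pair_int β hβ α hα
  have hk_pos : (0 : ℝ) < k := hk ▸ by unfold pairing; positivity
  have hk'_pos : (0 : ℝ) < k' := hk' ▸ by unfold pairing; rw [ip_comm]; positivity
  have hcs : ip α β < ‖α‖ * ‖β‖ := by
    refine inner_lt_norm_mul_iff_real.2 fun h => ?_
    exact norm_ne_zero_iff.2 hβ0
      (LinearIndependent.pair_iff.1 hind ‖β‖ (-‖α‖) (by rw [neg_smul, h, add_neg_cancel])).1
  -- `k k' = 4 cos² θ < 4`, so one of the two Cartan integers is `1`.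
  have hprod : (k : ℝ) * k' < 4 := by
    have hsq : ip α β ^ 2 < ip α α * ip β β := by
      rw [ip_self_eq_norm_sq, ip_self_eq_norm_sq, ← mul_pow]
      exact pow_lt_pow_left₀ hcs hpos.le two_ne_zero
    rw [← hk, ← hk', pairing, pairing, ip_comm β α, div_mul_div_comm,
      div_lt_iff₀ (by positivity)]
    nlinarith
  have hk1 : k = 1 ∨ k' = 1 := by
    have : k * k' < 4 := by exact_mod_cast hprod
    have : 0 < k := by exact_mod_cast hk_pos
    have : 0 < k' := by exact_mod_cast hk'_pos
    by_contra! h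
    have : 2 ≤ k := by omega
    have : 2 ≤ k' := by omega
    nlinarith
  rcases hk1 with rfl | rfl
  · simpa [hk] using P.reflect_mem α hα β hβ
  · simpa [hk'] using P.neg_mem _ (P.reflect_mem β hβ α hα)

lemma simple_sub_simple_not_mem {i j : Fin n} (hij : i ≠ j) : P.simple i - P.simple j ∉ P.Φ := by
  intro h
  have hdiff : ∀ a b : Fin n, P.simple a - P.simple b =
      ∑ m, (Pi.single a 1 - Pi.single b 1 : Fin n → ℝ) m • P.simple m := by
    intro a b
    simp [sub_smul, Finset.sum_sub_distrib, Pi.single_apply]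
  obtain ⟨c, hc | hc⟩ := P.exists_nat_coeffs_of_mem h
  · have hj : (-1 : ℝ) = c j := by
      simpa [hij] using congrFun (P.sum_smul_simple_injective ((hdiff i j).symm.trans hc)) j
    linarith [(c j).cast_nonneg (α := ℝ)]
  · rw [neg_sub] at hc
    have hi : (-1 : ℝ) = c i := by
      simpa [hij] using congrFun (P.sum_smul_simple_injective ((hdiff j i).symm.trans hc)) i
    linarith [(c i).cast_nonneg (α := ℝ)]

lemma ip_simple_nonpos {i j : Fin n} (hij : i ≠ j) : ip (P.simple i) (P.simple j) ≤ 0 := by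
  by_contra! hpos
  have hind : LinearIndependent ℝ ![P.simple i, P.simple j] := by
    convert P.simpleBasis.linearIndependent.comp ![i, j] ?_ using 1
    · ext k; fin_cases k <;> simp [coe_simpleBasis]
    · intro a b; fin_cases a <;> fin_cases b <;> simp [hij, hij.symm]
  exact P.simple_sub_simple_not_mem hij (P.sub_mem_of_ip_pos (P.simple_mem i) (P.simple_mem j)
    hind hpos)

lemma ip_sum_nonpos_of_disjoint {p q : Fin n → ℝ} (hp : ∀ i, 0 ≤ p i) (hq : ∀ i, 0 ≤ q i)
    (hpq : ∀ i, p i = 0 ∨ q i = 0) :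
    ip (∑ i, p i • P.simple i) (∑ j, q j • P.simple j) ≤ 0 := by
  simp only [ip, sum_inner, inner_sum, inner_smul_left, inner_smul_right, RCLike.conj_to_real,
    Finset.mul_sum]
  refine Finset.sum_nonpos fun i _ => Finset.sum_nonpos fun j _ => ?_
  by_cases hij : i = j
  · subst hij
    rcases hpq i with h | h <;> simp [h]
  · exact mul_nonpos_of_nonneg_of_nonpos (hq i)
      (mul_nonpos_of_nonneg_of_nonpos (hp j) (P.ip_simple_nonpos (Ne.symm hij)))

lemma finite_setOf_mem_weightLattice_norm_le (R : ℝ) :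
    {y | y ∈ P.weightLattice ∧ ‖y‖ ≤ R}.Finite := by
  set N : Fin n → ℤ := fun j => ⌈2 * R / ‖P.simple j‖⌉
  have hinj : Function.Injective fun (y : EV n) (j : Fin n) => pairing y (P.simple j) := by
    intro y z h
    refine InnerProductSpace.ext_inner_right_basis P.simpleBasis fun j => ?_
    rw [coe_simpleBasis]
    change ip y (P.simple j) = ip z (P.simple j)
    rw [ip_eq_pairing_mul (P.simple_ne_zero j) y, ip_eq_pairing_mul (P.simple_ne_zero j) z]
    exact congrArg (· * _ / 2) (congrFun h j)
  refine Set.Finite.of_finite_image (Set.Finite.subset (Set.Finite.pi fun j =>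
    (Set.finite_Icc (-N j) (N j)).image (Int.cast : ℤ → ℝ)) ?_) hinj.injOn
  rintro _ ⟨y, ⟨hy, hyR⟩, rfl⟩ j -
  obtain ⟨k, hk⟩ := hy _ (P.simple_mem j)
  have hpos : 0 < ‖P.simple j‖ := norm_pos_iff.2 (P.simple_ne_zero j)
  have hkR : |(k : ℝ)| ≤ N j :=
    calc |(k : ℝ)| ≤ 2 * ‖y‖ / ‖P.simple j‖ := hk ▸ abs_pairing_le (P.simple_ne_zero j) y
      _ ≤ 2 * R / ‖P.simple j‖ := by gcongr
      _ ≤ N j := Int.le_ceil _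
  have hkN : |k| ≤ N j := by exact_mod_cast hkR
  exact ⟨k, abs_le.1 hkN, hk.symm⟩

lemma exists_sub_mem_rootLattice_norm_le (x : EV n) :
    ∃ y, x - y ∈ P.rootLattice ∧ ‖y‖ ≤ ∑ i, ‖P.simple i‖ := by
  set c := P.simpleBasis.equivFun x
  have hx : x = ∑ i, c i • P.simple i := by
    conv_lhs => rw [← P.simpleBasis.sum_equivFun x]
    rw [coe_simpleBasis]
  refine ⟨∑ i, Int.fract (c i) • P.simple i, P.mem_rootLattice_iff.2 ⟨fun i => ⌊c i⌋, ?_⟩, ?_⟩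
  · rw [hx, ← Finset.sum_sub_distrib]
    simp only [← sub_smul, Int.self_sub_fract]
  · refine (norm_sum_le _ _).trans (Finset.sum_le_sum fun i _ => ?_)
    rw [norm_smul, Real.norm_of_nonneg (Int.fract_nonneg _)]
    exact mul_le_of_le_one_left (norm_nonneg _) (Int.fract_lt_one _).le

abbrev fundamentalGroup : Type := P.weightLattice ⧸ P.rootLattice.addSubgroupOf P.weightLattice

lemma mk_eq_mk_iff {a b : P.weightLattice} :
    (a : P.fundamentalGroup) = b ↔ (a : EV n) - b ∈ P.rootLattice := by
  rw [QuotientAddGroup.eq_iff_sub_mem, AddSubgroup.mem_addSubgroupOf, AddSubgroup.coe_sub]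

lemma mk_eq_zero_iff {a : P.weightLattice} :
    (a : P.fundamentalGroup) = 0 ↔ (a : EV n) ∈ P.rootLattice := by
  rw [QuotientAddGroup.eq_zero_iff, AddSubgroup.mem_addSubgroupOf]

instance finite_fundamentalGroup : Finite P.fundamentalGroup := by
  set R := ∑ i, ‖P.simple i‖
  have := (P.finite_setOf_mem_weightLattice_norm_le R).to_subtype
  refine Finite.of_surjective (fun y : {y | y ∈ P.weightLattice ∧ ‖y‖ ≤ R} =>
    (⟨y, y.2.1⟩ : P.weightLattice)) ?_
  rintro ⟨a⟩
  obtain ⟨y, hy, hyR⟩ := P.exists_sub_mem_rootLattice_norm_le a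
  exact ⟨⟨y, P.mem_weightLattice_of_sub_mem a.2 hy, hyR⟩,
    P.mk_eq_mk_iff.2 (by simpa using P.rootLattice.neg_mem hy)⟩

lemma dominant_zero : P.Dominant 0 := fun i => by simp [pairing, ip]

def IsShortestInCoset (y : EV n) : Prop :=
  ∀ d ∈ P.rootLattice, ‖y‖ ≤ ‖y - d‖

lemma isShortestInCoset_zero : P.IsShortestInCoset 0 := fun d _ => by simp

lemma finite_coset_norm_le {x : EV n} (hx : x ∈ P.weightLattice) (R : ℝ) :
    {z | x - z ∈ P.rootLattice ∧ ‖z‖ ≤ R}.Finite :=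
  (P.finite_setOf_mem_weightLattice_norm_le R).subset fun _ hz =>
    ⟨P.mem_weightLattice_of_sub_mem hx hz.1, hz.2⟩

lemma exists_sub_mem_isShortestInCoset {x : EV n} (hx : x ∈ P.weightLattice) :
    ∃ y, x - y ∈ P.rootLattice ∧ P.IsShortestInCoset y := by
  have hxx : x - x ∈ P.rootLattice := by simp
  obtain ⟨y, ⟨hxy, hyx⟩, hmin⟩ := Set.exists_min_image _ (‖·‖) (P.finite_coset_norm_le hx ‖x‖)
    ⟨x, hxx, le_rfl⟩
  refine ⟨y, hxy, fun d hd => ?_⟩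
  have hxyd : x - (y - d) ∈ P.rootLattice := by
    convert P.rootLattice.add_mem hxy hd using 1; abel
  by_cases hshort : ‖y - d‖ ≤ ‖x‖
  · exact hmin _ ⟨hxyd, hshort⟩
  · exact hyx.trans (not_le.1 hshort).le

/-- Among the shortest vectors of a coset, one maximising the sum of the coordinates in the basis
of simple roots is dominant: the simple reflection `s_i` is an isometry preserving the coset, and
it changes that sum by `-⟨y, α_i∨⟩`. -/
lemma exists_sub_mem_dominant_isShortestInCoset {x : EV n} (hx : x ∈ P.weightLattice) :
    ∃ y, x - y ∈ P.rootLattice ∧ P.Dominant y ∧ P.IsShortestInCoset y := by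
  obtain ⟨y₀, hxy₀, hy₀⟩ := P.exists_sub_mem_isShortestInCoset hx
  obtain ⟨y, ⟨hxy, hyy₀⟩, hmax⟩ := Set.exists_max_image _ P.simpleBasis.sumCoords
    (P.finite_coset_norm_le hx ‖y₀‖) ⟨y₀, hxy₀, le_rfl⟩
  have hy : P.IsShortestInCoset y := fun d hd => by
    have hy₀d : y₀ - (y - d) ∈ P.rootLattice := by
      convert P.rootLattice.add_mem (P.rootLattice.sub_mem hxy hxy₀) hd using 1; abel
    simpa using hyy₀.trans (hy₀ _ hy₀d)
  refine ⟨y, hxy, fun i => ?_, hy⟩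
  by_contra! hneg
  set y' := y - pairing y (P.simple i) • P.simple i
  have hy'_mem : x - y' ∈ P.rootLattice := by
    convert P.rootLattice.add_mem hxy (P.pairing_smul_mem_rootLattice
      (P.mem_weightLattice_of_sub_mem hx hxy) (P.simple_mem i)) using 1
    simp only [y']
    abel
  have hy'_norm : ‖y'‖ ≤ ‖y₀‖ := (norm_sub_pairing_smul (P.simple_ne_zero i) y).trans_le hyy₀
  have hsum : P.simpleBasis.sumCoords y' = P.simpleBasis.sumCoords y - pairing y (P.simple i) := by
    have hi : P.simpleBasis.sumCoords (P.simple i) = 1 := by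
      rw [← coe_simpleBasis, Module.Basis.sumCoords_self_apply]
    simp only [y', map_sub, map_smul, hi, smul_eq_mul, mul_one]
  linarith [hmax y' ⟨hy'_mem, hy'_norm⟩]

variable {P}

lemma DomLE.antisymm {x y : EV n} (hxy : P.DomLE x y) (hyx : P.DomLE y x) : x = y := by
  obtain ⟨c, hc⟩ := hxy
  obtain ⟨c', hc'⟩ := hyx
  have hsum : ∑ i, ((c i + c' i : ℕ) : ℝ) • P.simple i = ∑ i, (0 : ℝ) • P.simple i := by
    simp only [Nat.cast_add, add_smul, Finset.sum_add_distrib, ← hc, ← hc', zero_smul,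
      Finset.sum_const_zero, sub_add_sub_cancel, sub_self]
  have hc0 : ∀ i, c i = 0 := fun i => by
    have hi := congrFun (P.sum_smul_simple_injective hsum) i
    norm_cast at hi
    omega
  rw [← sub_eq_zero, ← neg_sub, hc]
  simp [hc0]

lemma DomLE.sub_mem_rootLattice {x y : EV n} (h : P.DomLE x y) : y - x ∈ P.rootLattice := by
  obtain ⟨c, hc⟩ := h
  exact P.mem_rootLattice_iff.2 ⟨fun i => c i, by simp [hc]⟩

lemma Dominant.ip_sum_nonneg {x : EV n} (hx : P.Dominant x) {c : Fin n → ℝ}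
    (hc : ∀ i, 0 ≤ c i) : 0 ≤ ip x (∑ i, c i • P.simple i) := by
  simp only [ip, inner_sum, inner_smul_right]
  exact Finset.sum_nonneg fun i _ =>
    mul_nonneg (hc i) ((pairing_nonneg_iff (P.simple_ne_zero i)).1 (hx i))

lemma IsShortestInCoset.two_ip_le {y d : EV n} (hy : P.IsShortestInCoset y)
    (hd : d ∈ P.rootLattice) : 2 * ip y d ≤ ip d d := by
  have hsq : ip y y ≤ ip (y - d) (y - d) := by
    rw [ip_self_eq_norm_sq, ip_self_eq_norm_sq]
    exact pow_le_pow_left₀ (norm_nonneg _) (hy d hd) 2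
  simp only [ip, inner_sub_left, inner_sub_right, real_inner_comm y d] at hsq ⊢
  linarith

lemma IsShortestInCoset.domLE {y μ : EV n} (hy : P.IsShortestInCoset y) (hμ : P.Dominant μ)
    (hμy : μ - y ∈ P.rootLattice) : P.DomLE y μ := by
  obtain ⟨m, hm⟩ := P.mem_rootLattice_iff.1 hμy
  set p : Fin n → ℕ := fun i => (m i).toNat
  set q : Fin n → ℕ := fun i => (-m i).toNat
  set dp := ∑ i, (p i : ℝ) • P.simple i
  set dm := ∑ i, (q i : ℝ) • P.simple i
  have hsplit : μ - y = dp - dm := by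
    rw [hm, ← Finset.sum_sub_distrib]
    refine Finset.sum_congr rfl fun i _ => ?_
    rw [← sub_smul]
    congr 1
    exact_mod_cast (m i).toNat_sub_toNat_neg.symm
  have hdp_dm : ip dp dm ≤ 0 := P.ip_sum_nonpos_of_disjoint (fun _ => Nat.cast_nonneg _)
    (fun _ => Nat.cast_nonneg _) fun i => by simp only [Nat.cast_eq_zero, p, q]; omega
  have hμ_dm : 0 ≤ ip μ dm := hμ.ip_sum_nonneg fun _ => Nat.cast_nonneg _
  have hy_dm : 2 * ip y dm ≤ ip dm dm :=
    hy.two_ip_le (P.mem_rootLattice_iff.2 ⟨fun i => q i, by simp [dm]⟩)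
  have hdm : dm = 0 := by
    have hμ_eq : μ = y + dp - dm := by rw [add_sub_assoc, ← hsplit]; abel
    rw [hμ_eq] at hμ_dm
    simp only [ip, inner_add_left, inner_sub_left] at hμ_dm hdp_dm hy_dm
    exact real_inner_self_nonpos.1 (by linarith)
  exact ⟨p, by rw [hsplit, hdm, sub_zero]⟩

lemma IsShortestInCoset.minuscule {y : EV n} (hy : P.IsShortestInCoset y)
    (hyX : y ∈ P.weightLattice) (hdom : P.Dominant y) (hy0 : y ≠ 0) : P.Minuscule y :=
  ⟨hy0, hyX, hdom, fun _ _ hz hzy => DomLE.antisymm hzy (hy.domLE hz <| by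
    simpa using P.rootLattice.neg_mem (DomLE.sub_mem_rootLattice hzy))⟩

lemma Minuscule.eq_of_isShortestInCoset {w y : EV n} (hw : P.Minuscule w)
    (hy : P.IsShortestInCoset y) (hyX : y ∈ P.weightLattice) (hdom : P.Dominant y)
    (hwy : w - y ∈ P.rootLattice) : y = w :=
  hw.2.2.2 y hyX hdom (hy.domLE hw.2.2.1 hwy)

lemma Minuscule.not_mem_rootLattice {w : EV n} (hw : P.Minuscule w) : w ∉ P.rootLattice :=
  fun hwR => hw.1 (Minuscule.eq_of_isShortestInCoset hw P.isShortestInCoset_zero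
    P.weightLattice.zero_mem P.dominant_zero (by simpa using hwR)).symm

variable (P)

lemma existsUnique_minuscule_sub_mem {x : EV n} (hx : x ∈ P.weightLattice)
    (hxR : x ∉ P.rootLattice) : ∃! ϖ, P.Minuscule ϖ ∧ x - ϖ ∈ P.rootLattice := by
  obtain ⟨y, hxy, hdom, hy⟩ := P.exists_sub_mem_dominant_isShortestInCoset hx
  have hyX := P.mem_weightLattice_of_sub_mem hx hxy
  have hy0 : y ≠ 0 := by rintro rfl; exact hxR (by simpa using hxy)
  refine ⟨y, ⟨hy.minuscule hyX hdom hy0, hxy⟩, fun w ⟨hw, hxw⟩ => ?_⟩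
  refine (Minuscule.eq_of_isShortestInCoset hw hy hyX hdom ?_).symm
  simpa using P.rootLattice.sub_mem hxy hxw

noncomputable def minusculeClass (ϖ : {ϖ : EV n // P.Minuscule ϖ}) :
    {q : P.fundamentalGroup // q ≠ 0} :=
  ⟨(⟨ϖ, ϖ.2.2.1⟩ : P.weightLattice), fun h => ϖ.2.not_mem_rootLattice (P.mk_eq_zero_iff.1 h)⟩

lemma minusculeClass_bijective : Function.Bijective P.minusculeClass := by
  refine (Function.bijective_iff_existsUnique _).2 fun ⟨q, hq⟩ => ?_
  induction q using QuotientAddGroup.induction_on with | H a => ?_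
  obtain ⟨ϖ, ⟨hϖ, haϖ⟩, huniq⟩ :=
    P.existsUnique_minuscule_sub_mem a.2 fun h => hq (P.mk_eq_zero_iff.2 h)
  have hclass : ∀ w, P.minusculeClass w = ⟨a, hq⟩ ↔ (a : EV n) - w ∈ P.rootLattice := fun w => by
    rw [Subtype.ext_iff, minusculeClass, P.mk_eq_mk_iff, ← neg_mem_iff, neg_sub]
  exact ⟨⟨ϖ, hϖ⟩, (hclass _).2 haϖ, fun w hw => Subtype.ext (huniq w ⟨w.2, (hclass w).1 hw⟩)⟩

end RootSystemData

theorem coset_unique_minuscule_rep_and_card_general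
    {n : ℕ} (P : RootSystemData n) :
    (∀ x ∈ P.weightLattice, x ∉ P.rootLattice →
      ∃! ϖ : EV n, P.Minuscule ϖ ∧ x - ϖ ∈ P.rootLattice) ∧
    Nat.card (P.weightLattice ⧸ P.rootLattice.addSubgroupOf P.weightLattice) =
      1 + Nat.card {ϖ : EV n // P.Minuscule ϖ} := by
  classical
  refine ⟨fun x hx hxR => P.existsUnique_minuscule_sub_mem hx hxR, ?_⟩
  rw [← Nat.card_congr (Equiv.optionSubtypeNe 0), Finite.card_option, add_comm,
    Nat.card_congr (Equiv.ofBijective _ P.minusculeClass_bijective)]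

/-- Each nonzero coset of the root lattice `ℤR` in the weight
lattice `X` is represented by a unique minuscule weight; consequently
`|X/ℤR| = 1 + #(minuscule weights)`. -/
theorem coset_unique_minuscule_rep_and_card
    {n : ℕ} (hn : 1 ≤ n) (P : RootSystemData n) :
    (∀ x ∈ P.weightLattice, x ∉ P.rootLattice →
      ∃! ϖ : EV n, P.Minuscule ϖ ∧ x - ϖ ∈ P.rootLattice) ∧
    Nat.card (P.weightLattice ⧸ P.rootLattice.addSubgroupOf P.weightLattice) =
      1 + Nat.card {ϖ : EV n // P.Minuscule ϖ} :=
  coset_unique_minuscule_rep_and_card_general P
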